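/- The number of 2-linked subsets S ⊆ E of size 3 whose distance-2 graph Q_d²[S] is a triangle is 2^{d-2} d(d-1)(d-2)/3, and the number whose distance-2 graph is a path on 3 vertices is 2^{d-4} d(d-1)(d-2)(d-3). -/

import Mathlib

open Finset

/-- The hypercube graph `Q_d` on `{0,1}^d`: vertices adjacent iff they differ in
exactly one coordinate. -/
def cubeGraph (d : ℕ) : SimpleGraph (Fin d → Bool) where
  Adj x y := hammingDist x y = 1
  symm := ⟨fun (x y : Fin d → Bool) (h : hammingDist x y = 1) => show hammingDist y x = 1 by rw [hammingDist_comm]; exact h⟩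
  loopless := ⟨fun x (h : hammingDist x x = 1) => by simp [hammingDist_self] at h⟩

/-- The distance-2 graph on `{0,1}^d`: vertices adjacent iff Hamming distance 2. -/
def distTwoGraph (d : ℕ) : SimpleGraph (Fin d → Bool) where
  Adj x y := hammingDist x y = 2
  symm := ⟨fun (x y : Fin d → Bool) (h : hammingDist x y = 2) => show hammingDist y x = 2 by rw [hammingDist_comm]; exact h⟩
  loopless := ⟨fun x (h : hammingDist x x = 2) => by simp [hammingDist_self] at h⟩

/-- The even side `E` of the bipartition of `Q_d`. -/
def evenFinset (d : ℕ) : Finset (Fin d → Bool) :=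
  Finset.univ.filter fun x => Even (∑ i, if x i then 1 else 0 : ℕ)

/-- The odd side `O` of the bipartition of `Q_d`. -/
def oddFinset (d : ℕ) : Finset (Fin d → Bool) :=
  Finset.univ.filter fun x => ¬ Even (∑ i, if x i then 1 else 0 : ℕ)

/-- The neighbourhood `N(A)` of a set of vertices in `Q_d`. -/
def nbhd (d : ℕ) (A : Finset (Fin d → Bool)) : Finset (Fin d → Bool) :=
  A.biUnion fun x => Finset.univ.filter fun y => hammingDist x y = 1

/-- `S` is 2-linked: connected in the square of `Q_d` (for `S` inside one side of the
bipartition this is connectivity in the distance-2 graph). -/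
def TwoLinked (d : ℕ) (S : Finset (Fin d → Bool)) : Prop :=
  ((distTwoGraph d).induce (S : Set (Fin d → Bool))).Connected

/-! ### Auxiliary lemmas -/
variable {d : ℕ}

def flp (A : Finset (Fin d)) (v : Fin d → Bool) : Fin d → Bool :=
  fun i => if i ∈ A then !(v i) else v i

def dif (x y : Fin d → Bool) : Finset (Fin d) := {i | x i ≠ y i}

lemma hammingDist_eq (x y : Fin d → Bool) : hammingDist x y = (dif x y).card := rfl

lemma mem_dif {x y : Fin d → Bool} {i : Fin d} : i ∈ dif x y ↔ x i ≠ y i := by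
  simp [dif]

lemma dif_flp (A : Finset (Fin d)) (x : Fin d → Bool) : dif x (flp A x) = A := by
  ext i
  by_cases h : i ∈ A <;> simp [mem_dif, flp, h]

lemma flp_dif (x y : Fin d → Bool) : flp (dif x y) x = y := by
  funext i
  by_cases h : x i = y i
  · simp [flp, mem_dif, h]
  · simp only [flp, mem_dif]
    rw [if_pos h]
    cases hx : x i <;> cases hy : y i <;> simp_all

lemma dif_flp_flp (A B : Finset (Fin d)) (x : Fin d → Bool) :
    dif (flp A x) (flp B x) = symmDiff A B := by
  ext i
  by_cases hA : i ∈ A <;> by_cases hB : i ∈ B <;>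
    simp [mem_dif, flp, hA, hB, Finset.mem_symmDiff]

lemma flp_inj {A B : Finset (Fin d)} {x : Fin d → Bool} (h : flp A x = flp B x) : A = B := by
  rw [← dif_flp A x, h, dif_flp]

lemma flp_ne_self {A : Finset (Fin d)} {x : Fin d → Bool} (hA : A.Nonempty) :
    flp A x ≠ x := by
  intro h
  have : A = ∅ := by
    have h2 : flp A x = flp ∅ x := by
      rw [h]; funext i; simp [flp]
    exact flp_inj h2
  rw [this] at hA
  exact Finset.not_nonempty_empty hA

lemma mem_evenFinset {x : Fin d → Bool} :
    x ∈ evenFinset d ↔ Even (∑ i, if x i then 1 else 0 : ℕ) := by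
  simp [evenFinset]

lemma cast_wt (x : Fin d → Bool) :
    ((∑ i, if x i then 1 else 0 : ℕ) : ZMod 2) = ∑ i, (if x i then 1 else 0 : ZMod 2) := by
  push_cast
  exact Finset.sum_congr rfl fun i _ => by split <;> simp

lemma even_iff_zmod {n : ℕ} : Even n ↔ (n : ZMod 2) = 0 := by
  rw [even_iff_two_dvd]
  exact (ZMod.natCast_eq_zero_iff n 2).symm

lemma flp_even {A : Finset (Fin d)} {x : Fin d → Bool} (hA : Even A.card)
    (hx : x ∈ evenFinset d) : flp A x ∈ evenFinset d := by
  rw [mem_evenFinset] at hx ⊢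
  rw [even_iff_zmod, cast_wt] at hx ⊢
  have : ∀ i, (if flp A x i then 1 else 0 : ZMod 2)
      = (if i ∈ A then 1 else 0) + (if x i then 1 else 0) := by
    intro i
    by_cases h : i ∈ A <;> cases hxi : x i <;> simp [flp, h, hxi] <;> decide
  rw [Finset.sum_congr rfl fun i _ => this i, Finset.sum_add_distrib]
  rw [Finset.sum_ite_mem, Finset.univ_inter, Finset.sum_const, hx, add_zero]
  have hcA : ((A.card : ℕ) : ZMod 2) = 0 := by rw [← even_iff_zmod]; exact hA
  simp [hcA]



lemma twoLinked_of_pairwise {S : Finset (Fin d → Bool)} (h3 : S.Nonempty)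
    (hp : ∀ x ∈ S, ∀ y ∈ S, x ≠ y → hammingDist x y = 2) : TwoLinked d S := by
  rw [TwoLinked, SimpleGraph.connected_iff]
  obtain ⟨x0, hx0⟩ := h3
  refine ⟨?_, ⟨⟨x0, hx0⟩⟩⟩
  rintro ⟨a, ha⟩ ⟨b, hb⟩
  by_cases hab : a = b
  · subst hab; rfl
  · exact SimpleGraph.Adj.reachable (by
      show (distTwoGraph d).Adj a b
      exact hp a ha b hb hab)

lemma exists_adj_of_reachable {V : Type*} {G : SimpleGraph V} {a b : V}
    (h : G.Reachable a b) (hne : a ≠ b) : ∃ c, G.Adj a c := by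
  obtain ⟨w⟩ := h
  cases w with
  | nil => exact absurd rfl hne
  | cons h p => exact ⟨_, h⟩

lemma exists_neighbor {S : Finset (Fin d → Bool)} (hc : TwoLinked d S)
    {a b : Fin d → Bool} (ha : a ∈ S) (hb : b ∈ S) (hab : a ≠ b) :
    ∃ w ∈ S, w ≠ a ∧ hammingDist a w = 2 := by
  have hr := hc.preconnected ⟨a, ha⟩ ⟨b, hb⟩
  have hne : (⟨a, ha⟩ : (S : Set (Fin d → Bool))) ≠ ⟨b, hb⟩ := by
    simp [Subtype.ext_iff, hab]
  obtain ⟨c, hadj⟩ := exists_adj_of_reachable hr hne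
  refine ⟨c.1, c.2, ?_, hadj⟩
  have := hadj.ne
  simp only [ne_eq, Subtype.ext_iff] at this
  exact fun h => this h.symm

lemma twoLinked_of_path {x y z : Fin d → Bool} (hxy : hammingDist x y = 2)
    (hyz : hammingDist y z = 2) : TwoLinked d ({x, y, z} : Finset (Fin d → Bool)) := by
  rw [TwoLinked, SimpleGraph.connected_iff]
  have hyS : y ∈ ({x, y, z} : Finset (Fin d → Bool)) := by simp
  refine ⟨?_, ⟨⟨y, by simp⟩⟩⟩
  have reach_of_eq : ∀ (u v : ((({x, y, z} : Finset (Fin d → Bool)) : Set (Fin d → Bool)))),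
      u.1 = v.1 → ((distTwoGraph d).induce _).Reachable u v := by
    rintro ⟨u, hu⟩ ⟨v, hv⟩ h
    cases Subtype.ext h
    exact SimpleGraph.Reachable.refl _
  have key : ∀ u : ((({x, y, z} : Finset (Fin d → Bool)) : Set (Fin d → Bool))),
      ((distTwoGraph d).induce _).Reachable u ⟨y, by simp⟩ := by
    rintro ⟨u, hu⟩
    simp only [Finset.coe_insert, Set.mem_insert_iff, Finset.coe_singleton,
      Set.mem_singleton_iff] at hu
    rcases hu with h | h | h
    · subst h
      by_cases huy : u = y
      · exact reach_of_eq _ _ huy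
      · exact SimpleGraph.Adj.reachable (by show (distTwoGraph d).Adj u y; exact hxy)
    · exact reach_of_eq _ _ h
    · subst h
      by_cases huy : u = y
      · exact reach_of_eq _ _ huy
      · exact SimpleGraph.Adj.reachable (by
          show (distTwoGraph d).Adj u y
          show hammingDist u y = 2
          rw [hammingDist_comm]; exact hyz)
  intro u v
  exact (key u).trans (key v).symm

lemma path_struct {S : Finset (Fin d → Bool)} (hS : S.card = 3) (hconn : TwoLinked d S)
    (hnp : ¬ ∀ x ∈ S, ∀ y ∈ S, x ≠ y → hammingDist x y = 2) :
    ∃ x ∈ S, ∃ y ∈ S, ∃ z ∈ S, x ≠ y ∧ y ≠ z ∧ x ≠ z ∧ S = {x, y, z} ∧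
      hammingDist x y = 2 ∧ hammingDist y z = 2 ∧ hammingDist x z ≠ 2 := by
  obtain ⟨a, b, c, hab, hac, hbc, hSe⟩ := Finset.card_eq_three.mp hS
  have haS : a ∈ S := by rw [hSe]; simp
  have hbS : b ∈ S := by rw [hSe]; simp
  have hcS : c ∈ S := by rw [hSe]; simp
  -- helper: produce the labeling given a center
  have mk : ∀ x y z : Fin d → Bool, x ∈ S → y ∈ S → z ∈ S → x ≠ y → y ≠ z → x ≠ z →
      S = {x, y, z} → hammingDist x y = 2 → hammingDist y z = 2 →
      (∃ x ∈ S, ∃ y ∈ S, ∃ z ∈ S, x ≠ y ∧ y ≠ z ∧ x ≠ z ∧ S = {x, y, z} ∧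
        hammingDist x y = 2 ∧ hammingDist y z = 2 ∧ hammingDist x z ≠ 2) := by
    intro x y z hx hy hz hxy hyz hxz hSet h1 h2
    refine ⟨x, hx, y, hy, z, hz, hxy, hyz, hxz, hSet, h1, h2, ?_⟩
    intro hdxz
    apply hnp
    intro u hu v hv huv
    rw [hSet] at hu hv
    simp only [Finset.mem_insert, Finset.mem_singleton] at hu hv
    have hyx : hammingDist y x = 2 := by rw [hammingDist_comm]; exact h1
    have hzy : hammingDist z y = 2 := by rw [hammingDist_comm]; exact h2
    have hzx : hammingDist z x = 2 := by rw [hammingDist_comm]; exact hdxz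
    rcases hu with rfl | rfl | rfl <;> rcases hv with rfl | rfl | rfl <;>
      first | exact absurd rfl huv | assumption
  have hset_abc : S = {a, b, c} := hSe
  have hset_bac : S = {b, a, c} := by rw [hSe]; ext u; simp; tauto
  have hset_acb : S = {a, c, b} := by rw [hSe]; ext u; simp; tauto
  by_cases h1 : hammingDist a b = 2
  · by_cases h2 : hammingDist a c = 2
    · -- center a
      exact mk b a c hbS haS hcS hab.symm hac hbc hset_bac
        (by rw [hammingDist_comm]; exact h1) h2
    · -- a~b, a≁c : c's neighbor must be b
      obtain ⟨w, hwS, hwc, hdw⟩ := exists_neighbor hconn hcS haS (Ne.symm hac)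
      rw [hSe] at hwS
      simp only [Finset.mem_insert, Finset.mem_singleton] at hwS
      rcases hwS with h | h | h
      · rw [h] at hdw
        exact absurd (by rw [hammingDist_comm]; exact hdw) h2
      · rw [h] at hdw
        exact mk a b c haS hbS hcS hab hbc hac hset_abc h1
          (by rw [hammingDist_comm]; exact hdw)
      · rw [h] at hwc; exact absurd rfl hwc
  · -- a ≁ b : a's neighbor is c, b's neighbor is c
    obtain ⟨w, hwS, hwa, hdw⟩ := exists_neighbor hconn haS hbS hab
    rw [hSe] at hwS
    simp only [Finset.mem_insert, Finset.mem_singleton] at hwS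
    have h2 : hammingDist a c = 2 := by
      rcases hwS with h | h | h
      · rw [h] at hwa; exact absurd rfl hwa
      · rw [h] at hdw; exact absurd hdw h1
      · rw [h] at hdw; exact hdw
    obtain ⟨w', hwS', hwb, hdw'⟩ := exists_neighbor hconn hbS haS hab.symm
    rw [hSe] at hwS'
    simp only [Finset.mem_insert, Finset.mem_singleton] at hwS'
    have h3 : hammingDist b c = 2 := by
      rcases hwS' with h | h | h
      · rw [h] at hdw'
        exact absurd (by rw [hammingDist_comm]; exact hdw') h1
      · rw [h] at hwb; exact absurd rfl hwb
      · rw [h] at hdw'; exact hdw'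
    -- center c
    exact mk a c b haS hcS hbS hac hbc.symm hab hset_acb h2
      (by rw [hammingDist_comm]; exact h3)

lemma flp_flp (A B : Finset (Fin d)) (x : Fin d → Bool) :
    flp B (flp A x) = flp (symmDiff A B) x := by
  funext i
  by_cases hA : i ∈ A <;> by_cases hB : i ∈ B <;>
    simp [flp, hA, hB, Finset.mem_symmDiff]

lemma even_wt_flp (A : Finset (Fin d)) (x : Fin d → Bool) :
    Even (∑ i, if flp A x i then 1 else 0 : ℕ) ↔
      Even (A.card + ∑ i, if x i then 1 else 0 : ℕ) := by
  rw [even_iff_zmod, even_iff_zmod, Nat.cast_add, cast_wt]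
  have : ∀ i, (if flp A x i then 1 else 0 : ZMod 2)
      = (if i ∈ A then 1 else 0) + (if x i then 1 else 0) := by
    intro i
    by_cases h : i ∈ A <;> cases hxi : x i <;> simp [flp, h, hxi] <;> decide
  rw [Finset.sum_congr rfl fun i _ => this i, Finset.sum_add_distrib,
    Finset.sum_ite_mem, Finset.univ_inter, Finset.sum_const, ← cast_wt]
  simp [add_comm]

lemma card_evenFinset (hd : 1 ≤ d) : (evenFinset d).card = 2 ^ (d - 1) := by
  have i0 : Fin d := ⟨0, hd⟩
  set O := Finset.univ.filter fun x : Fin d → Bool =>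
    ¬ Even (∑ i, if x i then 1 else 0 : ℕ) with hO
  have step : ∀ x : Fin d → Bool, x ∈ evenFinset d → flp {i0} x ∈ O := by
    intro x hx
    rw [mem_evenFinset] at hx
    rw [hO, Finset.mem_filter]
    refine ⟨Finset.mem_univ _, ?_⟩
    rw [even_wt_flp, Finset.card_singleton, add_comm, Nat.even_add_one]
    simpa using hx
  have step' : ∀ x : Fin d → Bool, x ∈ O → flp {i0} x ∈ evenFinset d := by
    intro x hx
    rw [hO, Finset.mem_filter] at hx
    rw [mem_evenFinset, even_wt_flp, Finset.card_singleton, add_comm, Nat.even_add_one]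
    exact hx.2
  have inv : ∀ x : Fin d → Bool, flp {i0} (flp {i0} x) = x := by
    intro x
    rw [flp_flp, symmDiff_self]
    funext i; simp [flp]
  have hEO : (evenFinset d).card = O.card :=
    Finset.card_bij' (fun x _ => flp {i0} x) (fun x _ => flp {i0} x)
      step step' (fun a _ => inv a) (fun a _ => inv a)
  have hsum : (evenFinset d).card + O.card = 2 ^ d := by
    rw [evenFinset, hO, Finset.card_filter_add_card_filter_not]
    simp [Finset.card_univ]
  have h2 : 2 ^ d = 2 ^ (d - 1) * 2 := by
    rw [← pow_succ]
    congr 1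
    omega
  omega

lemma choose_two_mul (n : ℕ) : n.choose 2 * 2 = n * (n - 1) := by
  rcases n with _ | m
  · simp
  · have hdvd : 2 ∣ (m + 1) * m :=
      even_iff_two_dvd.mp (by rw [mul_comm]; exact Nat.even_mul_succ_self m)
    rw [Nat.choose_two_right]
    simp only [Nat.add_sub_cancel]
    exact Nat.div_mul_cancel hdvd

open scoped Classical in
noncomputable def TriSet (d : ℕ) : Finset (Finset (Fin d → Bool)) :=
  Finset.univ.filter fun S => S ⊆ evenFinset d ∧ S.card = 3 ∧
    ∀ x ∈ S, ∀ y ∈ S, x ≠ y → hammingDist x y = 2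

lemma pair_card {j i : Fin d} (h : j ≠ i) : ({j, i} : Finset (Fin d)).card = 2 := by
  rw [Finset.card_insert_of_notMem (by simp [h]), Finset.card_singleton]

lemma symmDiff_pair {j i i' : Fin d} (hij : i ≠ j) (hij' : i' ≠ j) (hii' : i ≠ i') :
    symmDiff ({j, i} : Finset (Fin d)) {j, i'} = {i, i'} := by
  ext k
  simp only [Finset.mem_symmDiff, Finset.mem_insert, Finset.mem_singleton]
  constructor
  · rintro (⟨h1, h2⟩ | ⟨h1, h2⟩)
    · push_neg at h2
      rcases h1 with rfl | rfl
      · exact absurd rfl h2.1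
      · exact Or.inl rfl
    · push_neg at h2
      rcases h1 with rfl | rfl
      · exact absurd rfl h2.1
      · exact Or.inr rfl
  · rintro (rfl | rfl)
    · exact Or.inl ⟨Or.inr rfl, by push_neg; exact ⟨hij, hii'⟩⟩
    · exact Or.inr ⟨Or.inr rfl, by push_neg; exact ⟨hij', fun h => hii' h.symm⟩⟩

lemma tri_mk_mem {x : Fin d → Bool} {j : Fin d} {s : Finset (Fin d)}
    (hx : x ∈ evenFinset d) (hs : s.card = 2) (hj : j ∉ s) :
    insert x (s.image fun i => flp {j, i} x) ∈ TriSet d := by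
  have hji : ∀ i ∈ s, j ≠ i := fun i hi h => hj (h ▸ hi)
  have hdist : ∀ i ∈ s, hammingDist x (flp {j, i} x) = 2 := by
    intro i hi
    rw [hammingDist_eq, dif_flp]
    exact pair_card (hji i hi)
  have hinj : Set.InjOn (fun i => flp {j, i} x) s := by
    intro i hi i' hi' h
    have h2 : ({j, i} : Finset (Fin d)) = {j, i'} := flp_inj h
    have : i ∈ ({j, i'} : Finset (Fin d)) := h2 ▸ (by simp)
    simp only [Finset.mem_insert, Finset.mem_singleton] at this
    rcases this with h3 | h3
    · exact absurd h3.symm (hji i hi)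
    · exact h3
  have hxT : x ∉ s.image fun i => flp {j, i} x := by
    rw [Finset.mem_image]
    rintro ⟨i, hi, hfx⟩
    exact flp_ne_self (Finset.insert_nonempty _ _) hfx
  have hcard : (insert x (s.image fun i => flp {j, i} x)).card = 3 := by
    rw [Finset.card_insert_of_notMem hxT, Finset.card_image_of_injOn hinj, hs]
  rw [TriSet, Finset.mem_filter]
  refine ⟨Finset.mem_univ _, ?_, hcard, ?_⟩
  · -- subset of evenFinset
    intro u hu
    rcases Finset.mem_insert.mp hu with rfl | hu
    · exact hx
    · obtain ⟨i, hi, rfl⟩ := Finset.mem_image.mp hu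
      exact flp_even (by rw [pair_card (hji i hi)]; decide) hx
  · -- pairwise distance 2
    intro u hu v hv huv
    rcases Finset.mem_insert.mp hu with rfl | hu' <;>
      rcases Finset.mem_insert.mp hv with rfl | hv'
    · exact absurd rfl huv
    · obtain ⟨i, hi, rfl⟩ := Finset.mem_image.mp hv'
      exact hdist i hi
    · obtain ⟨i, hi, rfl⟩ := Finset.mem_image.mp hu'
      rw [hammingDist_comm]
      exact hdist i hi
    · obtain ⟨i, hi, rfl⟩ := Finset.mem_image.mp hu'
      obtain ⟨i', hi', rfl⟩ := Finset.mem_image.mp hv'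
      have hii' : i ≠ i' := fun h => huv (by rw [h])
      rw [hammingDist_eq, dif_flp_flp,
        symmDiff_pair (fun h => hj (by rw [← h]; exact hi)) (fun h => hj (by rw [← h]; exact hi')) hii',
        pair_card hii']

lemma card_symmDiff' (A B : Finset (Fin d)) :
    (symmDiff A B).card = (A \ B).card + (B \ A).card := by
  rw [symmDiff_def, Finset.sup_eq_union]
  exact Finset.card_union_of_disjoint disjoint_sdiff_sdiff

lemma tri_card :
    ((evenFinset d) ×ˢ ((Finset.univ : Finset (Fin d)).sigma fun j =>
        Finset.powersetCard 2 (Finset.univ.erase j))).card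
      = ((TriSet d).sigma fun S => S).card := by
  apply Finset.card_bij
    (fun p _ => (⟨insert p.1 ((p.2.2).image fun i => flp {p.2.1, i} p.1), p.1⟩ :
      (_ : Finset (Fin d → Bool)) × (Fin d → Bool)))
  · -- maps into target
    rintro ⟨x, j, s⟩ hp
    rw [Finset.mem_product, Finset.mem_sigma] at hp
    obtain ⟨hx, -, hs⟩ := hp
    rw [Finset.mem_powersetCard] at hs
    have hj : j ∉ s := fun h => (Finset.mem_erase.mp (hs.1 h)).1 rfl
    rw [Finset.mem_sigma]
    exact ⟨tri_mk_mem hx hs.2 hj, Finset.mem_insert_self _ _⟩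
  · -- injective
    rintro ⟨x, j, s⟩ hp ⟨x', j', s'⟩ hp' heq
    rw [Finset.mem_product, Finset.mem_sigma] at hp hp'
    obtain ⟨hx, -, hs⟩ := hp
    obtain ⟨hx', -, hs'⟩ := hp'
    rw [Finset.mem_powersetCard] at hs hs'
    have hj : j ∉ s := fun h => (Finset.mem_erase.mp (hs.1 h)).1 rfl
    have hj' : j' ∉ s' := fun h => (Finset.mem_erase.mp (hs'.1 h)).1 rfl
    simp only [Sigma.mk.inj_iff, heq_eq_eq] at heq
    obtain ⟨hSeq, hxeq⟩ := heq
    subst hxeq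
    -- x = x' ; now extract T = T'
    have hxT : x ∉ s.image fun i => flp {j, i} x := by
      rw [Finset.mem_image]; rintro ⟨i, hi, hfx⟩
      exact flp_ne_self (Finset.insert_nonempty _ _) hfx
    have hxT' : x ∉ s'.image fun i => flp {j', i} x := by
      rw [Finset.mem_image]; rintro ⟨i, hi, hfx⟩
      exact flp_ne_self (Finset.insert_nonempty _ _) hfx
    have hT : (s.image fun i => flp {j, i} x) = s'.image fun i => flp {j', i} x := by
      have := congrArg (fun T => T.erase x) hSeq
      simpa [Finset.erase_insert hxT, Finset.erase_insert hxT'] using this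
    have hF : (s.image fun i => ({j, i} : Finset (Fin d)))
        = s'.image fun i => ({j', i} : Finset (Fin d)) := by
      have h1 : (s.image fun i => ({j, i} : Finset (Fin d)))
          = (s.image fun i => flp {j, i} x).image (dif x) := by
        rw [Finset.image_image]
        exact Finset.image_congr fun i _ => (dif_flp _ _).symm
      have h2 : (s'.image fun i => ({j', i} : Finset (Fin d)))
          = (s'.image fun i => flp {j', i} x).image (dif x) := by
        rw [Finset.image_image]
        exact Finset.image_congr fun i _ => (dif_flp _ _).symm
      rw [h1, h2, hT]
    -- extract j = j'
    obtain ⟨i1, i2, hi12, hs2'⟩ := Finset.card_eq_two.mp hs.2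
    have hs2 : s = {i1, i2} := hs2'
    have hmem1 : ({j, i1} : Finset (Fin d)) ∈ s'.image fun i => ({j', i} : Finset (Fin d)) := by
      rw [← hF, Finset.mem_image]; exact ⟨i1, by rw [hs2]; simp, rfl⟩
    have hmem2 : ({j, i2} : Finset (Fin d)) ∈ s'.image fun i => ({j', i} : Finset (Fin d)) := by
      rw [← hF, Finset.mem_image]; exact ⟨i2, by rw [hs2]; simp, rfl⟩
    obtain ⟨k1, -, hk1⟩ := Finset.mem_image.mp hmem1
    obtain ⟨k2, -, hk2⟩ := Finset.mem_image.mp hmem2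
    have hj'1 : j' ∈ ({j, i1} : Finset (Fin d)) := by rw [← hk1]; simp
    have hj'2 : j' ∈ ({j, i2} : Finset (Fin d)) := by rw [← hk2]; simp
    simp only [Finset.mem_insert, Finset.mem_singleton] at hj'1 hj'2
    have hjj' : j = j' := by
      rcases hj'1 with h1 | h1
      · exact h1.symm
      · rcases hj'2 with h2 | h2
        · exact h2.symm
        · exact absurd (h1.symm.trans h2) hi12
    subst hjj'
    -- extract s = s'
    have hss' : s = s' := by
      ext i
      constructor
      · intro hi
        have : ({j, i} : Finset (Fin d)) ∈ s'.image fun i' => ({j, i'} : Finset (Fin d)) := by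
          rw [← hF, Finset.mem_image]; exact ⟨i, hi, rfl⟩
        obtain ⟨k, hk, hke⟩ := Finset.mem_image.mp this
        have : i ∈ ({j, k} : Finset (Fin d)) := by rw [hke]; simp
        simp only [Finset.mem_insert, Finset.mem_singleton] at this
        rcases this with h | h
        · exact absurd (h ▸ hi) hj
        · exact h ▸ hk
      · intro hi
        have : ({j, i} : Finset (Fin d)) ∈ s.image fun i' => ({j, i'} : Finset (Fin d)) := by
          rw [hF, Finset.mem_image]; exact ⟨i, hi, rfl⟩
        obtain ⟨k, hk, hke⟩ := Finset.mem_image.mp this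
        have : i ∈ ({j, k} : Finset (Fin d)) := by rw [hke]; simp
        simp only [Finset.mem_insert, Finset.mem_singleton] at this
        rcases this with h | h
        · exact absurd (h ▸ hi) hj'
        · exact h ▸ hk
    subst hss'
    rfl
  · -- surjective
    rintro ⟨S, v⟩ hb
    rw [Finset.mem_sigma] at hb
    obtain ⟨hS, hv⟩ := hb
    rw [TriSet, Finset.mem_filter] at hS
    obtain ⟨-, hSE, hS3, hpair⟩ := hS
    have herase : (S.erase v).card = 2 := by
      rw [Finset.card_erase_of_mem hv, hS3]
    obtain ⟨y, z, hyz, hyz2⟩ := Finset.card_eq_two.mp herase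
    have hyS : y ∈ S := Finset.mem_of_mem_erase (hyz2 ▸ (by simp) : y ∈ S.erase v)
    have hzS : z ∈ S := Finset.mem_of_mem_erase (hyz2 ▸ (by simp) : z ∈ S.erase v)
    have hyv : y ≠ v := (Finset.mem_erase.mp (hyz2 ▸ (by simp) : y ∈ S.erase v)).1
    have hzv : z ≠ v := (Finset.mem_erase.mp (hyz2 ▸ (by simp) : z ∈ S.erase v)).1
    set A := dif v y with hA
    set B := dif v z with hB
    have hAc : A.card = 2 := by
      rw [hA, ← hammingDist_eq]; exact hpair v hv y hyS (Ne.symm hyv)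
    have hBc : B.card = 2 := by
      rw [hB, ← hammingDist_eq]; exact hpair v hv z hzS (Ne.symm hzv)
    have hyf : flp A v = y := flp_dif v y
    have hzf : flp B v = z := flp_dif v z
    have hsd : (symmDiff A B).card = 2 := by
      have : dif y z = symmDiff A B := by
        rw [← hyf, ← hzf]; exact dif_flp_flp A B v
      rw [← this, ← hammingDist_eq]
      exact hpair y hyS z hzS hyz
    have e1 : (A \ B).card + (A ∩ B).card = A.card := Finset.card_sdiff_add_card_inter A B
    have e2 : (B \ A).card + (B ∩ A).card = B.card := Finset.card_sdiff_add_card_inter B A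
    have e3 : (B ∩ A).card = (A ∩ B).card := by rw [Finset.inter_comm]
    have e4 : (symmDiff A B).card = (A \ B).card + (B \ A).card := card_symmDiff' A B
    have hint : (A ∩ B).card = 1 := by omega
    have hsd1 : (A \ B).card = 1 := by omega
    have hsd2 : (B \ A).card = 1 := by omega
    obtain ⟨j, hjint⟩ := Finset.card_eq_one.mp hint
    obtain ⟨a1, ha1⟩ := Finset.card_eq_one.mp hsd1
    obtain ⟨b1, hb1⟩ := Finset.card_eq_one.mp hsd2
    have hAeq : A = {j, a1} := by
      have := Finset.sdiff_union_inter A B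
      rw [ha1, hjint] at this
      rw [← this]
      ext k; simp [Or.comm]
    have hBeq : B = {j, b1} := by
      have := Finset.sdiff_union_inter B A
      rw [hb1, Finset.inter_comm, hjint] at this
      rw [← this]
      ext k; simp [Or.comm]
    have ha1A : a1 ∈ A \ B := by rw [ha1]; simp
    have hb1B : b1 ∈ B \ A := by rw [hb1]; simp
    have hjA : j ∈ A ∩ B := by rw [hjint]; simp
    have ha1j : a1 ≠ j := fun h =>
      (Finset.mem_sdiff.mp ha1A).2 (h ▸ (Finset.mem_inter.mp hjA).2)
    have hb1j : b1 ≠ j := fun h =>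
      (Finset.mem_sdiff.mp hb1B).2 (h ▸ (Finset.mem_inter.mp hjA).1)
    have ha1b1 : a1 ≠ b1 := fun h => by
      have := (Finset.mem_sdiff.mp ha1A).2
      rw [h] at this
      exact this (Finset.mem_sdiff.mp hb1B).1
    refine ⟨⟨v, j, {a1, b1}⟩, ?_, ?_⟩
    · rw [Finset.mem_product, Finset.mem_sigma, Finset.mem_powersetCard]
      refine ⟨hSE hv, Finset.mem_univ _, ?_, ?_⟩
      · intro k hk
        simp only [Finset.mem_insert, Finset.mem_singleton] at hk
        rcases hk with rfl | rfl
        · exact Finset.mem_erase.mpr ⟨ha1j, Finset.mem_univ _⟩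
        · exact Finset.mem_erase.mpr ⟨hb1j, Finset.mem_univ _⟩
      · exact pair_card ha1b1
    · simp only
      congr 1
      rw [Finset.image_insert, Finset.image_singleton, ← hAeq, ← hBeq, hyf, hzf]
      -- goal : insert v {y, z} = S
      apply Finset.eq_of_subset_of_card_le
      · intro u hu
        simp only [Finset.mem_insert, Finset.mem_singleton] at hu
        rcases hu with rfl | rfl | rfl
        · exact hv
        · exact hyS
        · exact hzS
      · have hc : (insert v ({y, z} : Finset (Fin d → Bool))).card = 3 := by
          rw [Finset.card_insert_of_notMem (by
            simp only [Finset.mem_insert, Finset.mem_singleton]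
            push_neg
            exact ⟨Ne.symm hyv, Ne.symm hzv⟩),
            Finset.card_insert_of_notMem (by simp [hyz]), Finset.card_singleton]
        rw [hc]
        have : S.card = 3 := hS3
        omega

lemma tri_count (hd : 4 ≤ d) :
    3 * (TriSet d).card = 2 ^ (d - 2) * d * (d - 1) * (d - 2) := by
  have hPT : ((TriSet d).sigma fun S => S).card = 3 * (TriSet d).card := by
    rw [Finset.card_sigma]
    rw [Finset.sum_congr rfl (fun S hS => (by
      rw [TriSet, Finset.mem_filter] at hS
      exact hS.2.2.1 : S.card = 3))]
    rw [Finset.sum_const, smul_eq_mul, mul_comm]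
  have hQ : ((Finset.univ : Finset (Fin d)).sigma fun j =>
      Finset.powersetCard 2 (Finset.univ.erase j)).card = d * (d - 1).choose 2 := by
    rw [Finset.card_sigma]
    rw [Finset.sum_congr rfl (fun j _ => (by
      rw [Finset.card_powersetCard, Finset.card_erase_of_mem (Finset.mem_univ _),
        Finset.card_univ, Fintype.card_fin] :
        (Finset.powersetCard 2 (Finset.univ.erase j)).card = (d - 1).choose 2))]
    rw [Finset.sum_const, smul_eq_mul, Finset.card_univ, Fintype.card_fin]
  have hprod := tri_card (d := d)
  rw [Finset.card_product, hQ, hPT, card_evenFinset (by omega)] at hprod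
  rw [← hprod]
  obtain ⟨e, rfl⟩ : ∃ e, d = e + 4 := ⟨d - 4, by omega⟩
  have h1 : e + 4 - 1 = e + 3 := by omega
  have h2 : e + 4 - 2 = e + 2 := by omega
  rw [h1, h2]
  have hc : (e + 3).choose 2 * 2 = (e + 3) * (e + 2) := by
    have := choose_two_mul (e + 3)
    rwa [show e + 3 - 1 = e + 2 by omega] at this
  apply Nat.eq_of_mul_eq_mul_left (show 0 < 2 by norm_num)
  calc 2 * (2 ^ (e + 3) * ((e + 4) * (e + 3).choose 2))
      = 2 ^ (e + 3) * (e + 4) * ((e + 3).choose 2 * 2) := by ring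
    _ = 2 ^ (e + 3) * (e + 4) * ((e + 3) * (e + 2)) := by rw [hc]
    _ = 2 * (2 ^ (e + 2) * (e + 4) * (e + 3) * (e + 2)) := by ring

lemma tri_set_eq :
    {S : Finset (Fin d → Bool) | S ⊆ evenFinset d ∧ S.card = 3 ∧ TwoLinked d S ∧
      (∀ x ∈ S, ∀ y ∈ S, x ≠ y → hammingDist x y = 2)} = ↑(TriSet d) := by
  ext S
  rw [Set.mem_setOf_eq, Finset.mem_coe, TriSet, Finset.mem_filter]
  constructor
  · rintro ⟨h1, h2, -, h4⟩
    exact ⟨Finset.mem_univ _, h1, h2, h4⟩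
  · rintro ⟨-, h1, h2, h4⟩
    refine ⟨h1, h2, twoLinked_of_pairwise (Finset.card_pos.mp (by omega)) h4, h4⟩

open scoped Classical in
noncomputable def PathSet (d : ℕ) : Finset (Finset (Fin d → Bool)) :=
  Finset.univ.filter fun S => S ⊆ evenFinset d ∧
    ∃ x ∈ S, ∃ y ∈ S, ∃ z ∈ S, x ≠ y ∧ y ≠ z ∧ x ≠ z ∧ S = {x, y, z} ∧
      hammingDist x y = 2 ∧ hammingDist y z = 2 ∧ hammingDist x z ≠ 2

open scoped Classical in
noncomputable def endpts (d : ℕ) (S : Finset (Fin d → Bool)) : Finset (Fin d → Bool) :=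
  S.filter fun v => ∃ w ∈ S, w ≠ v ∧ hammingDist v w ≠ 2

lemma endpts_eq {S : Finset (Fin d → Bool)} {x y z : Fin d → Bool}
    (hx : x ∈ S) (hz : z ∈ S)
    (hxy : x ≠ y) (hyz : y ≠ z) (hxz : x ≠ z) (hSeq : S = {x, y, z})
    (h1 : hammingDist x y = 2) (h2 : hammingDist y z = 2) (h3 : hammingDist x z ≠ 2) :
    endpts d S = {x, z} := by
  classical
  ext v
  rw [endpts, Finset.mem_filter]
  constructor
  · rintro ⟨hvS, w, hwS, hwv, hdvw⟩
    rw [hSeq] at hvS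
    simp only [Finset.mem_insert, Finset.mem_singleton] at hvS ⊢
    rcases hvS with rfl | rfl | rfl
    · exact Or.inl rfl
    · exfalso
      rw [hSeq] at hwS
      simp only [Finset.mem_insert, Finset.mem_singleton] at hwS
      rcases hwS with rfl | rfl | rfl
      · exact hdvw (by rw [hammingDist_comm]; exact h1)
      · exact hwv rfl
      · exact hdvw h2
    · exact Or.inr rfl
  · intro hv
    simp only [Finset.mem_insert, Finset.mem_singleton] at hv
    rcases hv with rfl | rfl
    · exact ⟨hx, z, hz, Ne.symm hxz, h3⟩
    · exact ⟨hz, x, hx, hxz, by rw [hammingDist_comm]; exact h3⟩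

lemma endpts_card {S : Finset (Fin d → Bool)} (hS : S ∈ PathSet d) :
    (endpts d S).card = 2 := by
  rw [PathSet, Finset.mem_filter] at hS
  obtain ⟨-, -, x, hx, y, hy, z, hz, hxy, hyz, hxz, hSeq, h1, h2, h3⟩ := hS
  rw [endpts_eq hx hz hxy hyz hxz hSeq h1 h2 h3]
  rw [Finset.card_insert_of_notMem (by simp [hxz]), Finset.card_singleton]

lemma symmDiff_eq_union_of_disjoint {A B : Finset (Fin d)} (h : Disjoint A B) :
    symmDiff A B = A ∪ B := by
  rw [symmDiff_def, Finset.sup_eq_union, Finset.sdiff_eq_self_iff_disjoint.mpr h,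
    Finset.sdiff_eq_self_iff_disjoint.mpr h.symm]

lemma path_mk_mem {x : Fin d → Bool} {A B : Finset (Fin d)} (hx : x ∈ evenFinset d)
    (hA : A.card = 2) (hB : B.card = 2) (hAB : Disjoint A B) :
    ({x, flp A x, flp (A ∪ B) x} : Finset (Fin d → Bool)) ∈ PathSet d ∧
      x ∈ endpts d ({x, flp A x, flp (A ∪ B) x} : Finset (Fin d → Bool)) := by
  classical
  set y := flp A x with hy
  set z := flp (A ∪ B) x with hz
  have hABc : (A ∪ B).card = 4 := by
    rw [Finset.card_union_of_disjoint hAB, hA, hB]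
  have hd1 : hammingDist x y = 2 := by rw [hy, hammingDist_eq, dif_flp, hA]
  have hdxz : hammingDist x z = 4 := by rw [hz, hammingDist_eq, dif_flp, hABc]
  have hsAB : symmDiff A (A ∪ B) = B := by
    rw [symmDiff_def, Finset.sup_eq_union,
      Finset.sdiff_eq_empty_iff_subset.mpr Finset.subset_union_left,
      Finset.union_sdiff_cancel_left hAB, Finset.empty_union]
  have hd2 : hammingDist y z = 2 := by
    rw [hy, hz, hammingDist_eq, dif_flp_flp, hsAB, hB]
  have hxy : x ≠ y := fun h => flp_ne_self (Finset.card_pos.mp (by omega)) h.symm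
  have hxz : x ≠ z := fun h => flp_ne_self (Finset.card_pos.mp (by omega)) h.symm
  have hyz : y ≠ z := by
    intro h
    have hAeq : A = A ∪ B := flp_inj (hy ▸ hz ▸ h)
    have : (A : Finset (Fin d)).card = 4 := by rw [hAeq, hABc]
    omega
  have hzE : z ∈ evenFinset d := flp_even (by rw [hABc]; decide) hx
  have hyE : y ∈ evenFinset d := flp_even (by rw [hA]; decide) hx
  have hd3 : hammingDist x z ≠ 2 := by rw [hdxz]; norm_num
  constructor
  · rw [PathSet, Finset.mem_filter]
    refine ⟨Finset.mem_univ _, ?_, x, by simp, y, by simp, z, by simp,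
      hxy, hyz, hxz, rfl, hd1, hd2, hd3⟩
    intro u hu
    simp only [Finset.mem_insert, Finset.mem_singleton] at hu
    rcases hu with rfl | rfl | rfl
    · exact hx
    · exact hyE
    · exact hzE
  · rw [endpts, Finset.mem_filter]
    exact ⟨by simp, z, by simp, Ne.symm hxz, hd3⟩

lemma path_surj_aux {v y z' : Fin d → Bool}
    (hvz : v ≠ z')
    (h1 : hammingDist v y = 2) (h2 : hammingDist y z' = 2)
    (h3 : hammingDist v z' ≠ 2) :
    ∃ A B : Finset (Fin d), A.card = 2 ∧ B.card = 2 ∧ Disjoint A B ∧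
      flp A v = y ∧ flp (A ∪ B) v = z' := by
  set A := dif v y with hA
  set B := dif y z' with hB
  have hAc : A.card = 2 := by rw [hA, ← hammingDist_eq]; exact h1
  have hBc : B.card = 2 := by rw [hB, ← hammingDist_eq]; exact h2
  have hyf : flp A v = y := flp_dif v y
  have hzf : flp B y = z' := flp_dif y z'
  have hzf2 : flp (symmDiff A B) v = z' := by rw [← flp_flp, hyf, hzf]
  have hdsd : (symmDiff A B).card = hammingDist v z' := by
    rw [hammingDist_eq, ← hzf2, dif_flp]
  have hne0 : hammingDist v z' ≠ 0 := by
    intro h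
    exact hvz (eq_of_hammingDist_eq_zero h)
  have e1 : (A \ B).card + (A ∩ B).card = A.card := Finset.card_sdiff_add_card_inter A B
  have e2 : (B \ A).card + (B ∩ A).card = B.card := Finset.card_sdiff_add_card_inter B A
  have e3 : (B ∩ A).card = (A ∩ B).card := by rw [Finset.inter_comm]
  have e4 : (symmDiff A B).card = (A \ B).card + (B \ A).card := card_symmDiff' A B
  have hint : (A ∩ B).card = 0 := by omega
  have hdisj : Disjoint A B :=
    Finset.disjoint_iff_inter_eq_empty.mpr (Finset.card_eq_zero.mp hint)
  refine ⟨A, B, hAc, hBc, hdisj, hyf, ?_⟩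
  rw [← symmDiff_eq_union_of_disjoint hdisj]
  exact hzf2

lemma path_card :
    ((evenFinset d) ×ˢ ((Finset.powersetCard 2 (Finset.univ : Finset (Fin d))).sigma fun A =>
        Finset.powersetCard 2 (Finset.univ \ A))).card
      = ((PathSet d).sigma fun S => endpts d S).card := by
  classical
  have memdisj : ∀ (A B : Finset (Fin d)), B ⊆ Finset.univ \ A → Disjoint A B := by
    intro A B hB
    rw [Finset.disjoint_left]
    intro a haA haB
    exact (Finset.mem_sdiff.mp (hB haB)).2 haA
  apply Finset.card_bij
    (fun p _ => (⟨{p.1, flp p.2.1 p.1, flp (p.2.1 ∪ p.2.2) p.1}, p.1⟩ :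
      (_ : Finset (Fin d → Bool)) × (Fin d → Bool)))
  · rintro ⟨x, A, B⟩ hp
    rw [Finset.mem_product, Finset.mem_sigma] at hp
    obtain ⟨hx, hA, hBm⟩ := hp
    rw [Finset.mem_powersetCard] at hA hBm
    have h := path_mk_mem hx hA.2 hBm.2 (memdisj A B hBm.1)
    rw [Finset.mem_sigma]
    exact ⟨h.1, h.2⟩
  · -- injective
    rintro ⟨x, A, B⟩ hp ⟨x', A', B'⟩ hp' heq
    rw [Finset.mem_product, Finset.mem_sigma] at hp hp'
    obtain ⟨hx, hA, hBm⟩ := hp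
    obtain ⟨hx', hA', hBm'⟩ := hp'
    rw [Finset.mem_powersetCard] at hA hBm hA' hBm'
    have hAB : Disjoint A B := memdisj A B hBm.1
    have hAB' : Disjoint A' B' := memdisj A' B' hBm'.1
    simp only [Sigma.mk.inj_iff, heq_eq_eq] at heq
    obtain ⟨hSeq, hxeq⟩ := heq
    subst hxeq
    have hA2 : A.card = 2 := hA.2
    have hB2 : B.card = 2 := hBm.2
    have hA2' : A'.card = 2 := hA'.2
    have hB2' : B'.card = 2 := hBm'.2
    have hABc : (A ∪ B).card = 4 := by
      rw [Finset.card_union_of_disjoint hAB, hA2, hB2]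
    have hABc' : (A' ∪ B').card = 4 := by
      rw [Finset.card_union_of_disjoint hAB', hA2', hB2']
    -- flp A' x ∈ LHS set
    have hyA' : flp A' x ∈ ({x, flp A x, flp (A ∪ B) x} : Finset (Fin d → Bool)) := by
      rw [hSeq]; simp
    simp only [Finset.mem_insert, Finset.mem_singleton] at hyA'
    have hAeq : A = A' := by
      rcases hyA' with h | h | h
      · exact absurd h (flp_ne_self (Finset.card_pos.mp (by omega)))
      · exact (flp_inj h).symm
      · have := flp_inj h
        rw [← this] at hABc
        omega
    subst hAeq
    have hzB' : flp (A ∪ B') x ∈ ({x, flp A x, flp (A ∪ B) x} : Finset (Fin d → Bool)) := by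
      rw [hSeq]; simp
    simp only [Finset.mem_insert, Finset.mem_singleton] at hzB'
    have hBeq : B = B' := by
      rcases hzB' with h | h | h
      · exact absurd h (flp_ne_self (Finset.card_pos.mp (by omega)))
      · have := flp_inj h
        rw [this] at hABc'
        rw [hA2] at hABc'
        omega
      · have huni : A ∪ B' = A ∪ B := flp_inj h
        have h1 : (A ∪ B') \ A = (A ∪ B) \ A := by rw [huni]
        rw [Finset.union_sdiff_cancel_left hAB', Finset.union_sdiff_cancel_left hAB] at h1
        exact h1.symm
    subst hBeq
    rfl
  · -- surjective
    rintro ⟨S, v⟩ hb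
    rw [Finset.mem_sigma] at hb
    obtain ⟨hS, hv⟩ := hb
    have hSP := hS
    rw [PathSet, Finset.mem_filter] at hS
    obtain ⟨-, hSE0, x, hx0, y, hy0, z, hz0, hxy, hyz, hxz, hSeq0, h1, h2, h3⟩ := hS
    have hSE : S ⊆ evenFinset d := hSE0
    have hx : x ∈ S := hx0
    have hy : y ∈ S := hy0
    have hz : z ∈ S := hz0
    have hSeq : S = {x, y, z} := hSeq0
    have hvmem : v ∈ ({x, z} : Finset (Fin d → Bool)) := by
      rw [← endpts_eq hx hz hxy hyz hxz hSeq h1 h2 h3]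
      exact hv
    simp only [Finset.mem_insert, Finset.mem_singleton] at hvmem
    have main : ∀ v' y' z' : Fin d → Bool, v' ∈ evenFinset d → v' ≠ z' →
        S = {v', y', z'} → hammingDist v' y' = 2 → hammingDist y' z' = 2 →
        hammingDist v' z' ≠ 2 →
        ∃ a ∈ ((evenFinset d) ×ˢ ((Finset.powersetCard 2 (Finset.univ : Finset (Fin d))).sigma
            fun A => Finset.powersetCard 2 (Finset.univ \ A))),
          (⟨{a.1, flp a.2.1 a.1, flp (a.2.1 ∪ a.2.2) a.1}, a.1⟩ :
          (_ : Finset (Fin d → Bool)) × (Fin d → Bool)) = ⟨S, v'⟩ := by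
      intro v' y' z' hvE hvz hSeq' hd1 hd2 hd3
      obtain ⟨A, B, hAc, hBc, hABd, hfy, hfz⟩ := path_surj_aux hvz hd1 hd2 hd3
      refine ⟨⟨v', A, B⟩, ?_, ?_⟩
      · rw [Finset.mem_product, Finset.mem_sigma, Finset.mem_powersetCard,
          Finset.mem_powersetCard]
        refine ⟨hvE, ⟨Finset.subset_univ _, hAc⟩, ?_, hBc⟩
        intro b hbB
        rw [Finset.mem_sdiff]
        exact ⟨Finset.mem_univ _, fun hbA => (Finset.disjoint_left.mp hABd) hbA hbB⟩
      · simp only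
        congr 1
        rw [hfy, hfz, hSeq']
    rcases hvmem with rfl | rfl
    · obtain ⟨a, ha, he⟩ := main v y z (hSE hx) hxz hSeq h1 h2 h3
      exact ⟨a, ha, he⟩
    · obtain ⟨a, ha, he⟩ := main v y x (hSE hz) (Ne.symm hxz) (by
          rw [hSeq]
          ext u
          simp only [Finset.mem_insert, Finset.mem_singleton]
          tauto) (by rw [hammingDist_comm]; exact h2)
        (by rw [hammingDist_comm]; exact h1) (by rw [hammingDist_comm]; exact h3)
      exact ⟨a, ha, he⟩

lemma path_count (hd : 4 ≤ d) :
    (PathSet d).card = 2 ^ (d - 4) * d * (d - 1) * (d - 2) * (d - 3) := by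
  have hPP : ((PathSet d).sigma fun S => endpts d S).card = 2 * (PathSet d).card := by
    rw [Finset.card_sigma]
    rw [Finset.sum_congr rfl (fun S hS => endpts_card hS)]
    rw [Finset.sum_const, smul_eq_mul, mul_comm]
  have hQ : ((Finset.powersetCard 2 (Finset.univ : Finset (Fin d))).sigma fun A =>
      Finset.powersetCard 2 (Finset.univ \ A)).card = d.choose 2 * (d - 2).choose 2 := by
    rw [Finset.card_sigma]
    rw [Finset.sum_congr rfl (fun A hA => (by
      rw [Finset.mem_powersetCard] at hA
      rw [Finset.card_powersetCard, Finset.card_sdiff_of_subset (Finset.subset_univ _),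
        Finset.card_univ, Fintype.card_fin, hA.2] :
        (Finset.powersetCard 2 (Finset.univ \ A)).card = (d - 2).choose 2))]
    rw [Finset.sum_const, smul_eq_mul, Finset.card_powersetCard, Finset.card_univ,
      Fintype.card_fin]
  have hprod := path_card (d := d)
  rw [Finset.card_product, hQ, hPP, card_evenFinset (by omega)] at hprod
  obtain ⟨e, rfl⟩ : ∃ e, d = e + 4 := ⟨d - 4, by omega⟩
  have h1 : e + 4 - 1 = e + 3 := by omega
  have h2 : e + 4 - 2 = e + 2 := by omega
  have h3 : e + 4 - 3 = e + 1 := by omega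
  have h4 : e + 4 - 4 = e := by omega
  rw [h1, h2, h3, h4]
  rw [h1, h2] at hprod
  have hc1 : (e + 4).choose 2 * 2 = (e + 4) * (e + 3) := by
    have := choose_two_mul (e + 4)
    rwa [show e + 4 - 1 = e + 3 by omega] at this
  have hc2 : (e + 2).choose 2 * 2 = (e + 2) * (e + 1) := by
    have := choose_two_mul (e + 2)
    rwa [show e + 2 - 1 = e + 1 by omega] at this
  apply Nat.eq_of_mul_eq_mul_left (show 0 < 8 by norm_num)
  calc 8 * (PathSet (e + 4)).card
      = 4 * (2 * (PathSet (e + 4)).card) := by ring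
    _ = 4 * (2 ^ (e + 3) * ((e + 4).choose 2 * (e + 2).choose 2)) := by rw [hprod]
    _ = 2 ^ (e + 3) * (((e + 4).choose 2 * 2) * ((e + 2).choose 2 * 2)) := by ring
    _ = 2 ^ (e + 3) * (((e + 4) * (e + 3)) * ((e + 2) * (e + 1))) := by rw [hc1, hc2]
    _ = 8 * (2 ^ e * (e + 4) * (e + 3) * (e + 2) * (e + 1)) := by ring

lemma path_set_eq :
    {S : Finset (Fin d → Bool) | S ⊆ evenFinset d ∧ S.card = 3 ∧ TwoLinked d S ∧
      ¬ (∀ x ∈ S, ∀ y ∈ S, x ≠ y → hammingDist x y = 2)} = ↑(PathSet d) := by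
  ext S
  rw [Set.mem_setOf_eq, Finset.mem_coe, PathSet, Finset.mem_filter]
  constructor
  · rintro ⟨h1, h2, h3, h4⟩
    exact ⟨Finset.mem_univ _, h1, path_struct h2 h3 h4⟩
  · rintro ⟨-, hE, x, hx, y, hy, z, hz, hxy, hyz, hxz, hSeq, hd1, hd2, hd3⟩
    refine ⟨hE, ?_, ?_, ?_⟩
    · rw [hSeq]
      rw [Finset.card_insert_of_notMem (by
          simp only [Finset.mem_insert, Finset.mem_singleton]
          push_neg
          exact ⟨hxy, hxz⟩),
        Finset.card_insert_of_notMem (by simp [hyz]), Finset.card_singleton]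
    · rw [hSeq]
      exact twoLinked_of_path hd1 hd2
    · intro h
      exact hd3 (h x hx z hz hxz)

/-- Counts of 2-linked triples in `E`: triangles in the distance-2 graph number
`2^(d-2) d(d-1)(d-2)/3` (stated multiplied by 3), and paths number
`2^(d-4) d(d-1)(d-2)(d-3)`. -/
theorem count_twoLinked_triples (d : ℕ) (hd : 4 ≤ d) :
    3 * Set.ncard {S : Finset (Fin d → Bool) |
        S ⊆ evenFinset d ∧ S.card = 3 ∧ TwoLinked d S ∧
        (∀ x ∈ S, ∀ y ∈ S, x ≠ y → hammingDist x y = 2)}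
      = 2 ^ (d - 2) * d * (d - 1) * (d - 2) ∧
    Set.ncard {S : Finset (Fin d → Bool) |
        S ⊆ evenFinset d ∧ S.card = 3 ∧ TwoLinked d S ∧
        ¬ (∀ x ∈ S, ∀ y ∈ S, x ≠ y → hammingDist x y = 2)}
      = 2 ^ (d - 4) * d * (d - 1) * (d - 2) * (d - 3) := by
  constructor
  · rw [tri_set_eq, Set.ncard_coe_finset]
    exact tri_count hd
  · rw [path_set_eq, Set.ncard_coe_finset]
    exact path_count hd
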